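/- Let a, b > 0 with 0 < ε < 1, and suppose â, b̂ > 0 satisfy (1-ε)a ≤ â ≤ (1+ε)a and (1-ε)b ≤ b̂ ≤ (1+ε)b. Then ŝ = (b̂ - â)/max(â, b̂) satisfies ŝ ≥ s - 4ε/(1-ε), where s = (b - a)/max(a, b). -/

import Mathlib

/-!
Writing the silhouette as `(b - a) / max a b = min 1 (b / a) - min 1 (a / b)` makes it
monotone in each ratio, and the map `min 1` loses at most `C - 1` when its argument shrinks
by a factor `C ≥ 1`. Both ratios `b / a` and `â / b̂` are off by at most the factor
`C = (1 + ε) / (1 - ε)` in the unfavourable direction, so each term costs at most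
`C - 1 = 2ε / (1 - ε)`.
-/

lemma min_one_le_min_one_add_of_le_mul {x y C : ℝ} (hC : 1 ≤ C) (h : x ≤ C * y) :
    min 1 x ≤ min 1 y + (C - 1) := by
  have hmin : min 1 y ≤ 1 := min_le_left _ _
  calc min 1 x ≤ min C (C * y) := min_le_min hC h
    _ = C * min 1 y := by rw [mul_min_of_nonneg _ _ (by linarith), mul_one]
    _ ≤ min 1 y + (C - 1) := by nlinarith

lemma sub_div_max_eq_min_one_sub_min_one {a b : ℝ} (ha : 0 < a) (hb : 0 < b) :
    (b - a) / max a b = min 1 (b / a) - min 1 (a / b) := by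
  rcases le_total a b with hab | hba
  · rw [max_eq_right hab, min_eq_left ((one_le_div ha).2 hab),
      min_eq_right ((div_le_one hb).2 hab)]
    field_simp
  · rw [max_eq_left hba, min_eq_right ((div_le_one ha).2 hba),
      min_eq_left ((one_le_div hb).2 hba)]
    field_simp

theorem silhouette_lower_bound_general (a b ah bh ε : ℝ) (ha : 0 < a) (hb : 0 < b)
    (hah : 0 < ah) (hbh : 0 < bh) (hε : 0 < ε) (hε1 : ε < 1)
    (ha2 : ah ≤ (1 + ε) * a)
    (hb1 : (1 - ε) * b ≤ bh) :
    (bh - ah) / max ah bh ≥ (b - a) / max a b - 4 * ε / (1 - ε) := by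
  have hε' : 0 < 1 - ε := by linarith
  set C := (1 + ε) / (1 - ε) with hC_def
  have hC : 1 ≤ C := by rw [le_div_iff₀ hε']; linarith
  have hcross : (1 - ε) * b * ah ≤ (1 + ε) * a * bh := by
    nlinarith [mul_le_mul hb1 ha2 hah.le hbh.le]
  have hba : b / a ≤ C * (bh / ah) := by
    rw [hC_def, div_mul_div_comm, div_le_div_iff₀ ha (by positivity)]
    linarith
  have hab : ah / bh ≤ C * (a / b) := by
    rw [hC_def, div_mul_div_comm, div_le_div_iff₀ hbh (by positivity)]
    linarith
  have hloss : 4 * ε / (1 - ε) = 2 * (C - 1) := by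
    rw [hC_def]; field_simp; ring
  rw [ge_iff_le, sub_div_max_eq_min_one_sub_min_one ha hb,
    sub_div_max_eq_min_one_sub_min_one hah hbh, hloss]
  linarith [min_one_le_min_one_add_of_le_mul hC hba, min_one_le_min_one_add_of_le_mul hC hab]

theorem silhouette_lower_bound (a b ah bh ε : ℝ) (ha : 0 < a) (hb : 0 < b)
    (hah : 0 < ah) (hbh : 0 < bh) (hε : 0 < ε) (hε1 : ε < 1)
    (ha1 : (1 - ε) * a ≤ ah) (ha2 : ah ≤ (1 + ε) * a)
    (hb1 : (1 - ε) * b ≤ bh) (hb2 : bh ≤ (1 + ε) * b) :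
    (bh - ah) / max ah bh ≥ (b - a) / max a b - 4 * ε / (1 - ε) :=
  silhouette_lower_bound_general a b ah bh ε ha hb hah hbh hε hε1 ha2 hb1
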